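/- For any non-crossing partition pi of {1,...,n} and any 1 ≤ r ≤ n, k ≥ 1, the Kreweras complement of the duplication-insertion I_r^k(pi) equals the interval insertion applied to the Kreweras complement: Kr(I_r^k(pi)) = Ĩ_r^k(Kr(pi)). -/

import Mathlib

open scoped BigOperators Classical

/-- Partitions of `Fin n` (i.e. of `{1,…,n}`). -/
abbrev NCP (n : ℕ) := Finpartition (Finset.univ : Finset (Fin n))

/-- `x` and `y` lie in the same block of `P`. -/
def pRel {n : ℕ} (P : NCP n) (x y : Fin n) : Prop := ∃ t ∈ P.parts, x ∈ t ∧ y ∈ t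

/-- `P` is a non-crossing partition. -/
def IsNonCrossing {n : ℕ} (P : NCP n) : Prop :=
  ∀ a b c d : Fin n, a < b → b < c → c < d → pRel P a c → pRel P b d → pRel P a b

/-- Every block of `P` has exactly `k` elements (`k`-equal). -/
def IsKEqual (k : ℕ) {n : ℕ} (P : NCP n) : Prop := ∀ t ∈ P.parts, t.card = k

/-- Every block of `P` has size divisible by `k` (`k`-divisible). -/
def IsKDivisible (k : ℕ) {n : ℕ} (P : NCP n) : Prop := ∀ t ∈ P.parts, k ∣ t.card

/-- Every block of `P` contains only numbers of one residue class mod `k`. -/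
def IsKPreserving (k : ℕ) {n : ℕ} (P : NCP n) : Prop :=
  ∀ t ∈ P.parts, ∀ x ∈ t, ∀ y ∈ t, (x : ℕ) % k = (y : ℕ) % k

/-- The relation on `{1,…,2n}` obtained by putting `P` on the odd positions and `Q` on
the even positions (0-indexed: `P` on evens, `Q` on odds). -/
def jointRel {n : ℕ} (P Q : NCP n) (x y : Fin (2 * n)) : Prop :=
  ((x : ℕ) % 2 = 0 ∧ (y : ℕ) % 2 = 0 ∧
      pRel P ⟨(x : ℕ) / 2, by have := x.isLt; omega⟩ ⟨(y : ℕ) / 2, by have := y.isLt; omega⟩) ∨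
  ((x : ℕ) % 2 = 1 ∧ (y : ℕ) % 2 = 1 ∧
      pRel Q ⟨(x : ℕ) / 2, by have := x.isLt; omega⟩ ⟨(y : ℕ) / 2, by have := y.isLt; omega⟩)

/-- A symmetric-relation analogue of non-crossing. -/
def RelNonCrossing {m : ℕ} (R : Fin m → Fin m → Prop) : Prop :=
  ∀ a b c d : Fin m, a < b → b < c → c < d → R a c → R b d → R a b

/-- `Q` is the Kreweras complement of `P`: the union `P ∪ Q` (interleaved) is non-crossing and
`Q` is the largest such partition in the reverse refinement order. -/
def IsKr {n : ℕ} (P Q : NCP n) : Prop :=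
  RelNonCrossing (jointRel P Q) ∧ ∀ Q' : NCP n, RelNonCrossing (jointRel P Q') → Q' ≤ Q

/-- Position correspondence for the duplication–insertion operation `I_r^j` (1-indexed `r`):
position `x` of the new partition corresponds to position `a` of the old one. Positions
`r+1,…,r+j-1` (1-indexed) correspond to nothing (they are singletons), and both positions
`r` and `r+j` correspond to the old position `r`. -/
def dRel (j r : ℕ) {n : ℕ} (x : Fin (n + j)) (a : Fin n) : Prop :=
  ((x : ℕ) < r ∧ (a : ℕ) = (x : ℕ)) ∨
  ((x : ℕ) = r - 1 + j ∧ (a : ℕ) = r - 1) ∨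
  (r - 1 + j < (x : ℕ) ∧ (a : ℕ) + j = (x : ℕ))

/-- `P'` is obtained from `P` by the duplication–insertion operation `I_r^j`: the element at
(1-indexed) position `r` is duplicated (positions `r` and `r+j` are joined into the block that
contained `r`) and `j-1` singletons are inserted between them. -/
def IsDupIns {n : ℕ} (j r : ℕ) (P : NCP n) (P' : NCP (n + j)) : Prop :=
  ∀ x y : Fin (n + j), pRel P' x y ↔
    (x = y ∨ ∃ a b : Fin n, dRel j r x a ∧ dRel j r y b ∧ pRel P a b)

/-- Position correspondence for the interval-insertion operation `Ĩ_r^j` (1-indexed `r`):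
the new interval block occupies (1-indexed) positions `r,…,r+j-1`. -/
def iRel (j r : ℕ) {n : ℕ} (x : Fin (n + j)) (a : Fin n) : Prop :=
  ((x : ℕ) < r - 1 ∧ (a : ℕ) = (x : ℕ)) ∨
  (r - 1 + j ≤ (x : ℕ) ∧ (a : ℕ) + j = (x : ℕ))

/-- `P'` is obtained from `P` by the interval-insertion operation `Ĩ_r^j`: a new interval block
of size `j` is inserted between (1-indexed) positions `r-1` and `r`. -/
def IsIntIns {n : ℕ} (j r : ℕ) (P : NCP n) (P' : NCP (n + j)) : Prop :=
  ∀ x y : Fin (n + j), pRel P' x y ↔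
    ((r - 1 ≤ (x : ℕ) ∧ (x : ℕ) < r - 1 + j ∧ r - 1 ≤ (y : ℕ) ∧ (y : ℕ) < r - 1 + j) ∨
      ∃ a b : Fin n, iRel j r x a ∧ iRel j r y b ∧ pRel P a b)

/-!
The Kreweras complement `Q` of a non-crossing `P` is the coarsest partition that interleaves
non-crossingly with `P`; hence two of its positions `x ≤ y` share a block exactly when the chord
joining the gaps `x` and `y` of `P` crosses no block of `P`. In `I_r^k(P)` the positions strictly
between the two copies of `r` are singletons, so the `k` gaps between those copies are joined
pairwise, while the chord from `r` to `r + k` separates them from every other gap. Away from these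
`k` gaps, deleting the inserted positions matches the gaps and the blocks of `I_r^k(P)` with those
of `P` preserving crossings, so the remaining Kreweras blocks are those of `Q`.
-/

section Blocks

variable {n : ℕ}

lemma pRel_iff_mem_part {P : NCP n} {x y : Fin n} : pRel P x y ↔ x ∈ P.part y :=
  (P.mem_part_iff_exists).symm

lemma pRel_refl (P : NCP n) (x : Fin n) : pRel P x x :=
  pRel_iff_mem_part.2 (P.mem_part (Finset.mem_univ x))

lemma pRel.symm {P : NCP n} {x y : Fin n} (h : pRel P x y) : pRel P y x := by
  obtain ⟨t, ht, hx, hy⟩ := h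
  exact ⟨t, ht, hy, hx⟩

lemma pRel_comm {P : NCP n} {x y : Fin n} : pRel P x y ↔ pRel P y x :=
  ⟨pRel.symm, pRel.symm⟩

lemma pRel.mono {P Q : NCP n} (hPQ : P ≤ Q) {x y : Fin n} (h : pRel P x y) : pRel Q x y := by
  obtain ⟨t, ht, hx, hy⟩ := h
  obtain ⟨c, hc, htc⟩ := hPQ ht
  exact ⟨c, hc, htc hx, htc hy⟩

lemma pRel_ofSetoid {s : Setoid (Fin n)} [DecidableRel s.r] {x y : Fin n} :
    pRel (Finpartition.ofSetoid s) x y ↔ s y x :=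
  pRel_iff_mem_part.trans Finpartition.mem_part_ofSetoid_iff_rel

noncomputable def pairPartition (x y : Fin n) : NCP n :=
  Finpartition.ofSetoid (Setoid.ker fun u => if u = y then x else u)

lemma pRel_pairPartition (x y : Fin n) : pRel (pairPartition x y) x y := by
  rw [pairPartition, pRel_ofSetoid, Setoid.ker_def]
  simp

lemma eq_or_eq_of_pRel_pairPartition {x y u v : Fin n} (hxy : x ≠ y)
    (h : pRel (pairPartition x y) u v) : u = v ∨ (u = x ∧ v = y) ∨ (u = y ∧ v = x) := by
  rw [pairPartition, pRel_ofSetoid, Setoid.ker_def] at h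
  split_ifs at h <;> subst_vars <;> tauto

end Blocks

section Kreweras

variable {n : ℕ}

lemma jointRel_iff {P Q : NCP n} {x y : Fin (2 * n)} :
    jointRel P Q x y ↔ ∃ a b : Fin n,
      ((x : ℕ) = 2 * a ∧ (y : ℕ) = 2 * b ∧ pRel P a b) ∨
      ((x : ℕ) = 2 * a + 1 ∧ (y : ℕ) = 2 * b + 1 ∧ pRel Q a b) := by
  constructor
  · rintro (⟨hx, hy, h⟩ | ⟨hx, hy, h⟩)
    · exact ⟨_, _, Or.inl ⟨by simp only; omega, by simp only; omega, h⟩⟩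
    · exact ⟨_, _, Or.inr ⟨by simp only; omega, by simp only; omega, h⟩⟩
  · rintro ⟨a, b, ⟨hx, hy, h⟩ | ⟨hx, hy, h⟩⟩
    · refine Or.inl ⟨by omega, by omega, ?_⟩
      convert h using 1 <;> ext <;> simp only <;> omega
    · refine Or.inr ⟨by omega, by omega, ?_⟩
      convert h using 1 <;> ext <;> simp only <;> omega

lemma jointRel.mod_two_eq {P Q : NCP n} {x y : Fin (2 * n)} (h : jointRel P Q x y) :
    (x : ℕ) % 2 = (y : ℕ) % 2 := by
  obtain ⟨a, b, ⟨hx, hy, -⟩ | ⟨hx, hy, -⟩⟩ := jointRel_iff.1 h <;> omega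

lemma RelNonCrossing.isNonCrossing_left {P Q : NCP n} (h : RelNonCrossing (jointRel P Q)) :
    IsNonCrossing P := by
  intro a b c d hab hbc hcd hac hbd
  have hjoint := h ⟨2 * a, by omega⟩ ⟨2 * b, by omega⟩ ⟨2 * c, by omega⟩ ⟨2 * d, by omega⟩
    (Fin.mk_lt_mk.2 (by omega)) (Fin.mk_lt_mk.2 (by omega)) (Fin.mk_lt_mk.2 (by omega))
    (jointRel_iff.2 ⟨a, c, Or.inl ⟨rfl, rfl, hac⟩⟩) (jointRel_iff.2 ⟨b, d, Or.inl ⟨rfl, rfl, hbd⟩⟩)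
  obtain ⟨a', b', ⟨ha, hb, h'⟩ | ⟨ha, -⟩⟩ := jointRel_iff.1 hjoint
  · convert h' using 1 <;> ext <;> simp only at ha hb <;> omega
  · simp only at ha
    omega

/-- In `jointRel P Q` the position `x` of `Q` sits between the positions `x` and `x + 1` of `P`;
for `x ≤ y`, `Crosses P x y` says that the chord between these gaps of `P` crosses a block. -/
def Crosses (P : NCP n) (x y : Fin n) : Prop :=
  ∃ a b : Fin n, pRel P a b ∧
    (((a : ℕ) ≤ x ∧ (x : ℕ) < b ∧ (b : ℕ) ≤ y) ∨ ((x : ℕ) < a ∧ (a : ℕ) ≤ y ∧ (y : ℕ) < b))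

lemma RelNonCrossing.not_crosses {P Q : NCP n} (h : RelNonCrossing (jointRel P Q))
    {x y : Fin n} (hxy : pRel Q x y) : ¬ Crosses P x y := by
  rintro ⟨a, b, hab, ⟨h1, h2, h3⟩ | ⟨h1, h2, h3⟩⟩
  · have := (h ⟨2 * a, by omega⟩ ⟨2 * x + 1, by omega⟩ ⟨2 * b, by omega⟩ ⟨2 * y + 1, by omega⟩
      (Fin.mk_lt_mk.2 (by omega)) (Fin.mk_lt_mk.2 (by omega)) (Fin.mk_lt_mk.2 (by omega))
      (jointRel_iff.2 ⟨a, b, Or.inl ⟨rfl, rfl, hab⟩⟩)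
      (jointRel_iff.2 ⟨x, y, Or.inr ⟨rfl, rfl, hxy⟩⟩)).mod_two_eq
    simp only at this
    omega
  · have := (h ⟨2 * x + 1, by omega⟩ ⟨2 * a, by omega⟩ ⟨2 * y + 1, by omega⟩ ⟨2 * b, by omega⟩
      (Fin.mk_lt_mk.2 (by omega)) (Fin.mk_lt_mk.2 (by omega)) (Fin.mk_lt_mk.2 (by omega))
      (jointRel_iff.2 ⟨x, y, Or.inr ⟨rfl, rfl, hxy⟩⟩)
      (jointRel_iff.2 ⟨a, b, Or.inl ⟨rfl, rfl, hab⟩⟩)).mod_two_eq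
    simp only at this
    omega

lemma relNonCrossing_jointRel_pairPartition {P : NCP n} (hP : IsNonCrossing P) {x y : Fin n}
    (hxy : x < y) (hc : ¬ Crosses P x y) : RelNonCrossing (jointRel P (pairPartition x y)) := by
  intro a b c d hab hbc hcd hac hbd
  obtain ⟨a', c', ⟨ha, hc', hac'⟩ | ⟨ha, hc', hac'⟩⟩ := jointRel_iff.1 hac <;>
    obtain ⟨b', d', ⟨hb, hd, hbd'⟩ | ⟨hb, hd, hbd'⟩⟩ := jointRel_iff.1 hbd
  · exact jointRel_iff.2 ⟨a', b', Or.inl ⟨ha, hb,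
      hP a' b' c' d' (by omega) (by omega) (by omega) hac' hbd'⟩⟩
  · rcases eq_or_eq_of_pRel_pairPartition hxy.ne hbd' with h | ⟨rfl, rfl⟩ | ⟨rfl, rfl⟩
    · omega
    · exact (hc ⟨a', c', hac', Or.inl ⟨by omega, by omega, by omega⟩⟩).elim
    · omega
  · rcases eq_or_eq_of_pRel_pairPartition hxy.ne hac' with h | ⟨rfl, rfl⟩ | ⟨rfl, rfl⟩
    · omega
    · exact (hc ⟨b', d', hbd', Or.inr ⟨by omega, by omega, by omega⟩⟩).elim
    · omega
  · rcases eq_or_eq_of_pRel_pairPartition hxy.ne hac' with h | ⟨rfl, rfl⟩ | ⟨rfl, rfl⟩ <;>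
      rcases eq_or_eq_of_pRel_pairPartition hxy.ne hbd' with h' | ⟨h₁, h₂⟩ | ⟨h₁, h₂⟩ <;>
      omega

lemma IsKr.pRel_iff {P Q : NCP n} (hQ : IsKr P Q) {x y : Fin n} (hxy : x ≤ y) :
    pRel Q x y ↔ x = y ∨ ¬ Crosses P x y := by
  refine ⟨fun h => Or.inr (hQ.1.not_crosses h), ?_⟩
  rintro (rfl | hc)
  · exact pRel_refl Q x
  rcases hxy.lt_or_eq with hlt | rfl
  · exact (pRel_pairPartition x y).mono
      (hQ.2 _ (relNonCrossing_jointRel_pairPartition hQ.1.isNonCrossing_left hlt hc))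
  · exact pRel_refl Q x

end Kreweras

section Insertion

variable {n k r : ℕ}

lemma exists_iRel (hr : r ≤ n + 1) {x : Fin (n + k)}
    (hx : ¬ (r - 1 ≤ (x : ℕ) ∧ (x : ℕ) < r - 1 + k)) : ∃ a : Fin n, iRel k r x a := by
  by_cases h : (x : ℕ) < r - 1
  · exact ⟨⟨x, by omega⟩, Or.inl ⟨h, rfl⟩⟩
  · exact ⟨⟨x - k, by omega⟩, Or.inr ⟨by omega, by simp only; omega⟩⟩

lemma iRel.not_mem_gap {x : Fin (n + k)} {a : Fin n} (h : iRel k r x a) :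
    ¬ (r - 1 ≤ (x : ℕ) ∧ (x : ℕ) < r - 1 + k) := by
  unfold iRel at h
  omega

lemma iRel.unique {x : Fin (n + k)} {a b : Fin n} (ha : iRel k r x a) (hb : iRel k r x b) :
    a = b := by
  unfold iRel at ha hb
  omega

lemma iRel.eq_iff {x y : Fin (n + k)} {a b : Fin n} (ha : iRel k r x a) (hb : iRel k r y b) :
    x = y ↔ a = b := by
  unfold iRel at ha hb
  omega

lemma iRel.le_iff {x y : Fin (n + k)} {a b : Fin n} (ha : iRel k r x a) (hb : iRel k r y b) :
    x ≤ y ↔ a ≤ b := by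
  unfold iRel at ha hb
  omega

lemma exists_iRel_iRel_iff {x y : Fin (n + k)} {a b : Fin n} (ha : iRel k r x a)
    (hb : iRel k r y b) (R : Fin n → Fin n → Prop) :
    (∃ a' b', iRel k r x a' ∧ iRel k r y b' ∧ R a' b') ↔ R a b := by
  refine ⟨?_, fun h => ⟨a, b, ha, hb, h⟩⟩
  rintro ⟨a', b', ha', hb', h⟩
  rwa [ha.unique ha', hb.unique hb']

lemma exists_dRel (a : Fin n) : ∃ x : Fin (n + k), dRel k r x a := by
  by_cases h : (a : ℕ) < r
  · exact ⟨⟨a, by omega⟩, Or.inl ⟨h, rfl⟩⟩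
  · exact ⟨⟨a + k, by omega⟩, by unfold dRel; dsimp only; omega⟩

variable {P : NCP n} {P' : NCP (n + k)}

lemma IsDupIns.pRel_dup (h : IsDupIns k r P P') (hr1 : 1 ≤ r) (hr2 : r ≤ n) :
    pRel P' ⟨r - 1, by omega⟩ ⟨r - 1 + k, by omega⟩ :=
  (h _ _).2 <| Or.inr ⟨⟨r - 1, by omega⟩, ⟨r - 1, by omega⟩, Or.inl ⟨by simp only; omega, rfl⟩,
    Or.inr (Or.inl ⟨rfl, rfl⟩), pRel_refl P _⟩

lemma IsDupIns.eq_of_pRel_of_mem_gap (h : IsDupIns k r P P') {u v : Fin (n + k)}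
    (huv : pRel P' u v) (hu : r ≤ (u : ℕ)) (hu' : (u : ℕ) < r - 1 + k) : u = v := by
  rcases (h u v).1 huv with huv | ⟨a, b, ha, -, -⟩
  · exact huv
  · unfold dRel at ha
    omega

lemma IsDupIns.not_crosses_of_mem_gap (h : IsDupIns k r P P') {x y : Fin (n + k)}
    (hx : r - 1 ≤ (x : ℕ)) (hy : (y : ℕ) < r - 1 + k) : ¬ Crosses P' x y := by
  rintro ⟨u, v, huv, ⟨h1, h2, h3⟩ | ⟨h1, h2, h3⟩⟩
  · have := h.eq_of_pRel_of_mem_gap huv.symm (by omega) (by omega)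
    omega
  · have := h.eq_of_pRel_of_mem_gap huv (by omega) (by omega)
    omega

lemma IsDupIns.crosses_iff (h : IsDupIns k r P P') {x y : Fin (n + k)} {a b : Fin n}
    (ha : iRel k r x a) (hb : iRel k r y b) : Crosses P' x y ↔ Crosses P a b := by
  unfold iRel at ha hb
  constructor
  · rintro ⟨u, v, huv, hpat⟩
    rcases (h u v).1 huv with rfl | ⟨u', v', hu, hv, huv'⟩
    · omega
    · unfold dRel at hu hv
      exact ⟨u', v', huv', by omega⟩
  · rintro ⟨u', v', huv', hpat⟩
    obtain ⟨U, hU⟩ := exists_dRel (k := k) (r := r) u'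
    obtain ⟨V, hV⟩ := exists_dRel (k := k) (r := r) v'
    refine ⟨U, V, (h U V).2 (Or.inr ⟨u', v', hU, hV, huv'⟩), ?_⟩
    unfold dRel at hU hV
    omega

end Insertion

theorem stmt12_general (n k r : ℕ) (hr1 : 1 ≤ r) (hr2 : r ≤ n)
    (P : NCP n) (P' : NCP (n + k)) (hP' : IsDupIns k r P P')
    (Q : NCP n) (Q' : NCP (n + k)) (hQ : IsKr P Q) (hQ' : IsKr P' Q') :
    IsIntIns k r Q Q' := by
  intro x y
  wlog hxy : x ≤ y generalizing x y
  · rw [pRel_comm, this y x (le_of_not_ge hxy)]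
    exact or_congr (by omega) ⟨fun ⟨a, b, ha, hb, hab⟩ => ⟨b, a, hb, ha, hab.symm⟩,
      fun ⟨a, b, ha, hb, hab⟩ => ⟨b, a, hb, ha, hab.symm⟩⟩
  have hdup := hP'.pRel_dup hr1 hr2
  rw [hQ'.pRel_iff hxy]
  by_cases hx : r - 1 ≤ (x : ℕ) ∧ (x : ℕ) < r - 1 + k <;>
    by_cases hy : r - 1 ≤ (y : ℕ) ∧ (y : ℕ) < r - 1 + k
  · exact iff_of_true (Or.inr (hP'.not_crosses_of_mem_gap hx.1 hy.2))
      (Or.inl ⟨hx.1, hx.2, hy.1, hy.2⟩)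
  · refine iff_of_false ?_ ?_
    · rintro (rfl | hc)
      exacts [hy hx, hc ⟨_, _, hdup, Or.inl ⟨hx.1, hx.2, by simp only; omega⟩⟩]
    · rintro (hin | ⟨a, b, ha, -, -⟩)
      exacts [hy ⟨hin.2.2.1, hin.2.2.2⟩, ha.not_mem_gap hx]
  · refine iff_of_false ?_ ?_
    · rintro (rfl | hc)
      exacts [hx hy, hc ⟨_, _, hdup, Or.inr ⟨by simp only; omega, hy.1, hy.2⟩⟩]
    · rintro (hin | ⟨a, b, -, hb, -⟩)
      exacts [hx ⟨hin.1, hin.2.1⟩, hb.not_mem_gap hy]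
  · obtain ⟨a, ha⟩ := exists_iRel (by omega) hx
    obtain ⟨b, hb⟩ := exists_iRel (by omega) hy
    rw [exists_iRel_iRel_iff ha hb, hQ.pRel_iff ((ha.le_iff hb).1 hxy), ha.eq_iff hb,
      hP'.crosses_iff ha hb]
    exact (or_iff_right fun hin => hx ⟨hin.1, hin.2.1⟩).symm

/-- `Kr(I_r^k(P)) = Ĩ_r^k(Kr(P))`: the Kreweras complement of a duplication–insertion is the
interval insertion applied to the Kreweras complement. -/
theorem stmt12 (n k r : ℕ) (hk : 1 ≤ k) (hr1 : 1 ≤ r) (hr2 : r ≤ n)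
    (P : NCP n) (hP : IsNonCrossing P) (P' : NCP (n + k)) (hP' : IsDupIns k r P P')
    (Q : NCP n) (Q' : NCP (n + k)) (hQ : IsKr P Q) (hQ' : IsKr P' Q') :
    IsIntIns k r Q Q' :=
  stmt12_general n k r hr1 hr2 P P' hP' Q Q' hQ hQ'
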